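/- There exists a unique formal power series f(u) ∈ 1 + u⁻²ℂ[[u⁻¹]] such that f(u) f(u+κ) = (1 - u⁻²)⁻¹, where κ is a fixed nonzero complex number and f(u+κ) is expanded in powers of u⁻¹. Moreover this f also satisfies f(u) f(-u) = (1 - u⁻²)⁻¹. -/

import Mathlib

open PowerSeries

/-- For a series `f(u) = ∑_{s≥0} f_s u^{-s} ∈ ℂ[[u⁻¹]]` (encoded as a power series in
`X = u⁻¹`), the series `f(u + c)` obtained by expanding
`(u+c)^{-s} = ∑_{k≥0} (-1)^k C(s+k-1, k) c^k u^{-s-k}` in powers of `u⁻¹`. -/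
noncomputable def shiftC (c : ℂ) (F : PowerSeries ℂ) : PowerSeries ℂ :=
  PowerSeries.mk fun r => ∑ s ∈ Finset.range (r + 1),
    ((-1 : ℂ)) ^ (r - s) * (Nat.choose (r - 1) (r - s) : ℂ) * c ^ (r - s) *
      PowerSeries.coeff s F

/-- For `f(u) ∈ ℂ[[u⁻¹]]`, the series `f(-u)` (encoded in `X = u⁻¹`). -/
noncomputable def negArg (F : PowerSeries ℂ) : PowerSeries ℂ :=
  PowerSeries.mk fun r => (-1 : ℂ) ^ r * PowerSeries.coeff r F

/-- The series `(1 - u⁻²)⁻¹ = ∑_{r≥0} u^{-2r}` (encoded in `X = u⁻¹`). -/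
noncomputable def geomEven : PowerSeries ℂ :=
  PowerSeries.mk fun r => if Even r then (1 : ℂ) else 0

/-!
Write `X = u⁻¹`. Then `f(u + c)` is the substitution of `(u + c)⁻¹ = X / (1 + c X)` into `f`,
and this substitution is tangent to the identity. Hence, once `F₀ = 1`, the `n`-th coefficient
of `F(u) F(u + c)` is `2 Fₙ` plus a polynomial in `F₀, …, Fₙ₋₁`, so the equation
`F(u) F(u + c) = h(u)` determines `F` recursively.

For the reflection identity, substitute `u ↦ -u - c` in the equation: since `h = (1 - u⁻²)⁻¹`
is even, `F(-u - c) F(-u) = h(u + c)`. Therefore `G(u) = h(u) / F(-u)` satisfies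
`G(u) G(u + c) = h(u)` as well, and uniqueness gives `F = G`, i.e. `F(u) F(-u) = h(u)`.
-/

namespace PowerSeries

section ShiftVar

variable {R : Type*} [CommRing R]

@[simp]
theorem constantCoeff_rescale (r : R) (f : R⟦X⟧) :
    constantCoeff (rescale r f) = constantCoeff f := by
  rw [← coeff_zero_eq_constantCoeff_apply, coeff_rescale, pow_zero, one_mul,
    coeff_zero_eq_constantCoeff_apply]

theorem rescale_neg_one_eq_subst (f : R⟦X⟧) : rescale (-1) f = f.subst (-X : R⟦X⟧) := by
  rw [rescale_eq_subst, neg_one_smul]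

/-- `(u + c)⁻¹ = X / (1 + c X)` in the variable `X = u⁻¹`, so that `f.subst (shiftVar c)` is
`f(u + c)`. -/
noncomputable def shiftVar (c : R) : R⟦X⟧ := X * rescale (-c) (mk 1)

theorem constantCoeff_shiftVar (c : R) : constantCoeff (shiftVar c) = 0 := by
  simp [shiftVar]

theorem hasSubst_shiftVar (c : R) : HasSubst (shiftVar c) :=
  HasSubst.of_constantCoeff_zero' (constantCoeff_shiftVar c)

theorem shiftVar_mul_one_add (c : R) : shiftVar c * (1 + C c * X) = X := by
  have h : 1 + C c * X = rescale (-c) (1 - X) := by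
    simp [rescale_X]
  rw [shiftVar, h, mul_assoc, ← map_mul, mk_one_mul_one_sub_eq_one, map_one, mul_one]

theorem coeff_shiftVar_pow {c : R} {s n : ℕ} (h : s ≤ n) :
    coeff n (shiftVar c ^ s) = (-1) ^ (n - s) * (n - 1).choose (n - s) * c ^ (n - s) := by
  rcases Nat.eq_zero_or_pos s with rfl | hs
  · rcases Nat.eq_zero_or_pos n with rfl | hn
    · simp
    · simp [coeff_one, hn.ne', Nat.choose_eq_zero_of_lt (Nat.sub_one_lt hn.ne')]
  · obtain ⟨k, rfl⟩ := Nat.exists_eq_add_of_le h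
    obtain ⟨d, rfl⟩ : ∃ d, s = d + 1 := ⟨s - 1, by omega⟩
    rw [shiftVar, mul_pow, ← map_pow, coeff_X_pow_mul', if_pos h, mk_one_pow_eq_mk_choose_add,
      coeff_rescale, coeff_mk, Nat.add_sub_cancel_left, show d + 1 + k - 1 = d + k by omega,
      Nat.choose_symm_add, neg_pow]
    ring

theorem coeff_shiftVar_pow_of_lt {c : R} {s n : ℕ} (h : n < s) :
    coeff n (shiftVar c ^ s) = 0 := by
  rw [shiftVar, mul_pow, coeff_X_pow_mul', if_neg (not_le.mpr h)]

theorem coeff_one_shiftVar (c : R) : coeff 1 (shiftVar c) = 1 := by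
  simpa using coeff_shiftVar_pow (c := c) (le_refl 1)

theorem rescale_neg_one_shiftVar (c : R) : rescale (-1) (shiftVar c) = -shiftVar (-c) := by
  simp [shiftVar, rescale_X, rescale_rescale]

theorem subst_shiftVar_neg (c : R) : (shiftVar (-c)).subst (shiftVar c) = X := by
  have hσ := hasSubst_shiftVar c
  have h := congrArg (substAlgHom hσ) (shiftVar_mul_one_add (-c))
  have hC := (substAlgHom hσ).commutes (-c)
  rw [algebraMap_eq] at hC
  rw [map_mul, map_add, map_one, map_mul, hC, substAlgHom_X, coe_substAlgHom, map_neg] at h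
  linear_combination (1 + C c * X) * h +
    (1 + C c * (shiftVar (-c)).subst (shiftVar c)) * shiftVar_mul_one_add c

theorem subst_shiftVar_rescale_neg_one (c : R) :
    (rescale (-1) (shiftVar c)).subst (shiftVar c) = -X := by
  rw [rescale_neg_one_shiftVar, ← coe_substAlgHom (hasSubst_shiftVar c), map_neg,
    coe_substAlgHom, subst_shiftVar_neg]

/-- `f(u) ↦ f(-u + c) ↦ f(-(u + c) + c) = f(-u)`. -/
theorem rescale_neg_one_subst_shiftVar (c : R) (f : R⟦X⟧) :
    (rescale (-1) (f.subst (shiftVar c))).subst (shiftVar c) = rescale (-1) f := by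
  have hσ := hasSubst_shiftVar c
  have hX : HasSubst (-X : R⟦X⟧) := HasSubst.of_constantCoeff_zero' (by simp)
  have hτ : HasSubst (rescale (-1) (shiftVar c)) :=
    HasSubst.of_constantCoeff_zero' (by simp [constantCoeff_shiftVar])
  rw [rescale_neg_one_eq_subst, subst_comp_subst_apply hσ hX, ← rescale_neg_one_eq_subst,
    subst_comp_subst_apply hτ hσ, subst_shiftVar_rescale_neg_one, rescale_neg_one_eq_subst]

end ShiftVar

section TangentSubst

variable {R : Type*} [CommRing R] {a : R⟦X⟧}

theorem coeff_zero_subst (ha : constantCoeff a = 0) (f : R⟦X⟧) :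
    coeff 0 (f.subst a) = coeff 0 f := by
  rw [coeff_subst' (HasSubst.of_constantCoeff_zero' ha), finsum_eq_single _ 0]
  · simp
  · intro d hd
    rw [coeff_zero_eq_constantCoeff_apply, map_pow, ha, zero_pow hd, smul_zero]

theorem coeff_mul_subst_self (ha₀ : constantCoeff a = 0) (ha₁ : coeff 1 a = 1) (F : R⟦X⟧)
    {n : ℕ} (hn : n ≠ 0) :
    coeff n (F * F.subst a) =
      coeff n ((trunc n F : R⟦X⟧) * (trunc n F : R⟦X⟧).subst a) + 2 * coeff 0 F * coeff n F := by
  have ha := HasSubst.of_constantCoeff_zero' ha₀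
  obtain ⟨b, rfl⟩ := X_dvd_iff.mpr ha₀
  have hb : constantCoeff b = 1 := by
    rwa [← coeff_zero_eq_constantCoeff_apply, ← coeff_succ_X_mul]
  set P : R⟦X⟧ := (trunc n F : R⟦X⟧)
  set Q : R⟦X⟧ := mk fun i => coeff (i + n) F
  have hF : F = X ^ n * Q + P := eq_X_pow_mul_shift_add_trunc n F
  have hP : coeff 0 P = coeff 0 F := coeff_coe_trunc_of_lt (Nat.pos_of_ne_zero hn)
  have hQ : coeff 0 Q = coeff n F := by simp [Q]
  have hexpand : F * F.subst (X * b) =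
      P * P.subst (X * b) + X ^ n * (Q * P.subst (X * b) + P * b ^ n * Q.subst (X * b) +
        X ^ n * (Q * b ^ n * Q.subst (X * b))) := by
    conv_lhs => rw [hF, subst_add ha, subst_mul ha, subst_pow ha, subst_X ha]
    ring
  rw [hexpand, map_add, coeff_X_pow_mul', if_pos le_rfl, Nat.sub_self]
  simp only [coeff_zero_eq_constantCoeff_apply, map_add, map_mul, map_pow, constantCoeff_X,
    zero_pow hn, hb]
  simp only [← coeff_zero_eq_constantCoeff_apply, coeff_zero_subst ha₀, hP, hQ]
  ring

end TangentSubst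

section TwistedSqrt

variable {K : Type*} [Field K] {a : K⟦X⟧}

theorem eq_of_mul_subst_self_eq [NeZero (2 : K)] (ha₀ : constantCoeff a = 0)
    (ha₁ : coeff 1 a = 1) {F G : K⟦X⟧} (hF₀ : coeff 0 F = 1) (hG₀ : coeff 0 G = 1)
    (h : F * F.subst a = G * G.subst a) : F = G := by
  have htrunc : ∀ n, trunc n F = trunc n G := by
    intro n
    induction n with
    | zero => rfl
    | succ n ih =>
      suffices hn : coeff n F = coeff n G by rw [trunc_succ, trunc_succ, ih, hn]
      rcases eq_or_ne n 0 with rfl | hn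
      · rw [hF₀, hG₀]
      · have hcoeff := congrArg (coeff n) h
        rw [coeff_mul_subst_self ha₀ ha₁ F hn, coeff_mul_subst_self ha₀ ha₁ G hn, ih, hF₀, hG₀,
          add_right_inj] at hcoeff
        exact mul_left_cancel₀ two_ne_zero (by linear_combination hcoeff)
  ext n
  rw [← coeff_coe_trunc_of_lt n.lt_succ_self, htrunc, coeff_coe_trunc_of_lt n.lt_succ_self]

/-- Coefficients of the solution `F` of `F * F.subst a = h` with `coeff 0 F = 1`, solved for one
at a time by `coeff_mul_subst_self`. -/
noncomputable def twistedSqrtCoeff (a h : K⟦X⟧) : ℕ → K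
  | 0 => 1
  | n + 1 =>
    let P : K⟦X⟧ := ∑ i : Fin (n + 1), monomial i (twistedSqrtCoeff a h i)
    (coeff (n + 1) h - coeff (n + 1) (P * P.subst a)) / 2

noncomputable def twistedSqrt (a h : K⟦X⟧) : K⟦X⟧ := mk (twistedSqrtCoeff a h)

theorem coeff_zero_twistedSqrt (a h : K⟦X⟧) : coeff 0 (twistedSqrt a h) = 1 := by
  simp [twistedSqrt, twistedSqrtCoeff]

theorem coeff_succ_twistedSqrt (a h : K⟦X⟧) (n : ℕ) :
    coeff (n + 1) (twistedSqrt a h) =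
      (coeff (n + 1) h - coeff (n + 1) ((trunc (n + 1) (twistedSqrt a h) : K⟦X⟧) *
        (trunc (n + 1) (twistedSqrt a h) : K⟦X⟧).subst a)) / 2 := by
  have hP : ∑ i : Fin (n + 1), monomial i (twistedSqrtCoeff a h i) =
      (trunc (n + 1) (twistedSqrt a h) : K⟦X⟧) := by
    ext m
    simp [coeff_monomial, coeff_trunc, twistedSqrt,
      Fin.sum_univ_eq_sum_range (fun i => if m = i then twistedSqrtCoeff a h i else 0)]
  rw [twistedSqrt, coeff_mk, twistedSqrtCoeff, ← twistedSqrt, hP]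

theorem coeff_one_twistedSqrt (ha₀ : constantCoeff a = 0) (h : K⟦X⟧) :
    coeff 1 (twistedSqrt a h) = coeff 1 h / 2 := by
  rw [coeff_succ_twistedSqrt, trunc_one_left, coeff_zero_twistedSqrt, map_one,
    Polynomial.coe_one, ← coe_substAlgHom (HasSubst.of_constantCoeff_zero' ha₀), map_one]
  simp

theorem twistedSqrt_mul_subst_self [NeZero (2 : K)] (ha₀ : constantCoeff a = 0)
    (ha₁ : coeff 1 a = 1) {h : K⟦X⟧} (h₀ : coeff 0 h = 1) :
    twistedSqrt a h * (twistedSqrt a h).subst a = h := by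
  ext n
  rcases n with _ | n
  · rw [coeff_zero_eq_constantCoeff_apply, map_mul, ← coeff_zero_eq_constantCoeff_apply,
      ← coeff_zero_eq_constantCoeff_apply, coeff_zero_subst ha₀, coeff_zero_twistedSqrt, h₀,
      one_mul]
  · rw [coeff_mul_subst_self ha₀ ha₁ _ n.succ_ne_zero, coeff_zero_twistedSqrt,
      coeff_succ_twistedSqrt]
    field_simp
    ring

theorem mul_rescale_neg_one_self_of_mul_subst_shiftVar [NeZero (2 : K)] (c : K) {F h : K⟦X⟧}
    (hF₀ : coeff 0 F = 1) (hF : F * F.subst (shiftVar c) = h) (hh : rescale (-1) h = h) :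
    F * rescale (-1) F = h := by
  have hσ := hasSubst_shiftVar c
  have hreflect :
      rescale (-1) F * (rescale (-1) F).subst (shiftVar c) = h.subst (shiftVar c) := by
    have := congrArg (fun f => (rescale (-1) f).subst (shiftVar c)) hF
    simp only [map_mul, hh, subst_mul hσ, rescale_neg_one_subst_shiftVar] at this
    rw [← this, mul_comm]
  rw [coeff_zero_eq_constantCoeff_apply] at hF₀
  have hh₀ : constantCoeff h = 1 := by
    rw [← hF, map_mul, hF₀, ← coeff_zero_eq_constantCoeff_apply,
      coeff_zero_subst (constantCoeff_shiftVar c), coeff_zero_eq_constantCoeff_apply, hF₀, one_mul]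
  obtain ⟨G, hG⟩ : ∃ G, G * rescale (-1) F = h :=
    ⟨h * (rescale (-1) F)⁻¹, by rw [mul_assoc, PowerSeries.inv_mul_cancel _ (by simp [hF₀]),
      mul_one]⟩
  have hG₀ : coeff 0 G = 1 := by simpa [hF₀, hh₀] using congrArg constantCoeff hG
  have hLh : h.subst (shiftVar c) ≠ 0 := by
    intro h0
    simpa [h0, hh₀] using coeff_zero_subst (constantCoeff_shiftVar c) h
  have hGeq : G * G.subst (shiftVar c) = h := by
    refine mul_right_cancel₀ hLh ?_
    calc G * G.subst (shiftVar c) * h.subst (shiftVar c)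
        = (G * rescale (-1) F) * (G.subst (shiftVar c) * (rescale (-1) F).subst (shiftVar c)) := by
          rw [← hreflect]; ring
      _ = h * h.subst (shiftVar c) := by rw [← subst_mul hσ, hG]
  have hFG : F = G := eq_of_mul_subst_self_eq (constantCoeff_shiftVar c) (coeff_one_shiftVar c)
    (by rwa [coeff_zero_eq_constantCoeff_apply]) hG₀ (hF.trans hGeq.symm)
  rw [← hG, hFG]

end TwistedSqrt

end PowerSeries

theorem shiftC_eq_subst (c : ℂ) (F : ℂ⟦X⟧) : shiftC c F = F.subst (shiftVar c) := by
  ext n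
  rw [shiftC, coeff_mk, coeff_subst' (hasSubst_shiftVar c),
    finsum_eq_sum_of_support_subset _ (s := Finset.range (n + 1))]
  · refine Finset.sum_congr rfl fun s hs => ?_
    rw [coeff_shiftVar_pow (Nat.lt_succ_iff.mp (Finset.mem_range.mp hs)), smul_eq_mul]
    ring
  · intro s hs
    rw [Finset.coe_range, Set.mem_Iio]
    by_contra hn
    exact hs (by simp [coeff_shiftVar_pow_of_lt (by omega : n < s)])

theorem negArg_eq_rescale (F : ℂ⟦X⟧) : negArg F = rescale (-1) F := by
  ext n
  rw [negArg, coeff_mk, coeff_rescale]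

theorem coeff_zero_geomEven : coeff 0 geomEven = 1 := by
  simp [geomEven]

theorem coeff_one_geomEven : coeff 1 geomEven = 0 := by
  simp [geomEven]

theorem rescale_neg_one_geomEven : rescale (-1) geomEven = geomEven := by
  ext n
  by_cases h : Even n <;> simp [geomEven, h]

theorem statement10_general (κ : ℂ) :
    (∃! F : PowerSeries ℂ,
      PowerSeries.coeff 0 F = 1 ∧ PowerSeries.coeff 1 F = 0 ∧
        F * shiftC κ F = geomEven) ∧
    (∀ F : PowerSeries ℂ,
      PowerSeries.coeff 0 F = 1 → PowerSeries.coeff 1 F = 0 →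
        F * shiftC κ F = geomEven → F * negArg F = geomEven) := by
  have hσ₀ := constantCoeff_shiftVar κ
  have hσ₁ := coeff_one_shiftVar κ
  have hsol := twistedSqrt_mul_subst_self hσ₀ hσ₁ coeff_zero_geomEven
  simp only [shiftC_eq_subst, negArg_eq_rescale]
  refine ⟨⟨twistedSqrt (shiftVar κ) geomEven, ⟨coeff_zero_twistedSqrt _ _, ?_, hsol⟩, ?_⟩, ?_⟩
  · rw [coeff_one_twistedSqrt hσ₀, coeff_one_geomEven, zero_div]
  · rintro F ⟨hF₀, -, hF⟩
    exact eq_of_mul_subst_self_eq hσ₀ hσ₁ hF₀ (coeff_zero_twistedSqrt _ _) (hF.trans hsol.symm)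
  · intro F hF₀ _ hF
    exact mul_rescale_neg_one_self_of_mul_subst_shiftVar κ hF₀ hF rescale_neg_one_geomEven

/-- There is a unique `f(u) ∈ 1 + u⁻²ℂ[[u⁻¹]]` with `f(u)f(u+κ) = (1-u⁻²)⁻¹`, and
moreover any such `f` also satisfies `f(u)f(-u) = (1-u⁻²)⁻¹`. -/
theorem statement10 (κ : ℂ) (hκ : κ ≠ 0) :
    (∃! F : PowerSeries ℂ,
      PowerSeries.coeff 0 F = 1 ∧ PowerSeries.coeff 1 F = 0 ∧
        F * shiftC κ F = geomEven) ∧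
    (∀ F : PowerSeries ℂ,
      PowerSeries.coeff 0 F = 1 → PowerSeries.coeff 1 F = 0 →
        F * shiftC κ F = geomEven → F * negArg F = geomEven) :=
  statement10_general κ
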